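/- For all positive integers p and ω, there is an integer r = r(ω, p) satisfying the following. Let Γ be an abelian group with at most p elements of order at most 2, and let A ⊆ Γ be a non-empty set with |Γ \ A| ≤ ω. Then every Γ-labelled graph (H, γ) that is a subdivision of K_r in which every branching path has γ-value in A contains a cycle of γ-value in A; equivalently, arb_{(Γ,A)}(H, γ) ≥ 2. -/

import Mathlib

namespace ArbPaper

universe u v

/-- The `γ`-value of a walk: the sum of the labels of its edges. -/
def walkVal {V : Type u} {Γ : Type v} [AddCommGroup Γ] {G : SimpleGraph V}
    (γ : Sym2 V → Γ) {x y : V} (w : G.Walk x y) : Γ :=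
  (w.edges.map γ).sum

/-- The set `S` induces a subgraph having no cycle of `γ`-value in `A`. -/
def NoCycleValIn {V : Type u} {Γ : Type v} [AddCommGroup Γ] (G : SimpleGraph V)
    (γ : Sym2 V → Γ) (A : Set Γ) (S : Set V) : Prop :=
  ∀ (v : V) (w : G.Walk v v), w.IsCycle → (∀ x ∈ w.support, x ∈ S) →
    walkVal γ w ∉ A

/-- The `(Γ, A)`-vertex-arboricity of the subgraph of `G` induced on `S`:
the minimum number of parts in a partition of `S` such that each part induces
a subgraph having no cycle of `γ`-value in `A`. -/
noncomputable def arbOn {V : Type u} {Γ : Type v} [AddCommGroup Γ] (G : SimpleGraph V)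
    (γ : Sym2 V → Γ) (A : Set Γ) (S : Set V) : ℕ :=
  sInf {k : ℕ | ∃ f : V → Fin k,
    ∀ i : Fin k, NoCycleValIn G γ A {v | v ∈ S ∧ f v = i}}

/-- The `(Γ, A)`-vertex-arboricity of `(G, γ)`. -/
noncomputable def arb {V : Type u} {Γ : Type v} [AddCommGroup Γ] (G : SimpleGraph V)
    (γ : Sym2 V → Γ) (A : Set Γ) : ℕ :=
  arbOn G γ A Set.univ

/-- `G` contains an `(A, d)`-cycle: a cycle of `γ`-value in `A` and length at least `d`. -/
def ContainsADCycle {V : Type u} {Γ : Type v} [AddCommGroup Γ] (G : SimpleGraph V)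
    (γ : Sym2 V → Γ) (A : Set Γ) (d : ℕ) : Prop :=
  ∃ (v : V) (w : G.Walk v v), w.IsCycle ∧ walkVal γ w ∈ A ∧ d ≤ w.length

/-- `b` (the branching vertices) together with the branching paths `P i j` (for `i < j`)
form a subdivision of the complete graph `K t` inside `G`. -/
def IsKtSubdivision {V : Type u} (G : SimpleGraph V) (t : ℕ) (b : Fin t → V)
    (P : ∀ i j : Fin t, G.Walk (b i) (b j)) : Prop :=
  Function.Injective b ∧
  (∀ i j : Fin t, i < j → (P i j).IsPath) ∧
  (∀ i j : Fin t, i < j → ∀ v ∈ (P i j).support, v ∈ Set.range b → v = b i ∨ v = b j) ∧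
  (∀ i j k l : Fin t, i < j → k < l → (i, j) ≠ (k, l) → ∀ v,
    v ∈ (P i j).support → v ∈ (P k l).support →
      (v = b i ∨ v = b j) ∧ (v = b k ∨ v = b l))

/-- `G` itself is (as a whole) a subdivision of `K t` with data `b`, `P`:
every vertex and every edge of `G` lies on some branching path. -/
def IsSpanningKtSubdivision {V : Type u} (G : SimpleGraph V) (t : ℕ) (b : Fin t → V)
    (P : ∀ i j : Fin t, G.Walk (b i) (b j)) : Prop :=
  IsKtSubdivision G t b P ∧
  (∀ v : V, ∃ i j : Fin t, i < j ∧ v ∈ (P i j).support) ∧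
  (∀ e ∈ G.edgeSet, ∃ i j : Fin t, i < j ∧ e ∈ (P i j).edges)

/-- `G` contains an `(A, d)`-subdivision of `K t`: a subdivision of `K t` in which every
branching path has `γ`-value in `A` and length at least `d`. -/
def ContainsADSubdivision {V : Type u} {Γ : Type v} [AddCommGroup Γ] (G : SimpleGraph V)
    (γ : Sym2 V → Γ) (A : Set Γ) (t d : ℕ) : Prop :=
  ∃ (b : Fin t → V) (P : ∀ i j : Fin t, G.Walk (b i) (b j)),
    IsKtSubdivision G t b P ∧
    ∀ i j : Fin t, i < j → walkVal γ (P i j) ∈ A ∧ d ≤ (P i j).length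

/-- `w` is an `X`-path lying inside the induced subgraph `G[Y]`: a path of length at
least `2` whose endpoints lie in `X`, internal vertices lie outside `X`, and all of
whose vertices lie in `Y`. -/
def IsXPathIn {V : Type u} (G : SimpleGraph V) (X Y : Set V) {x y : V}
    (w : G.Walk x y) : Prop :=
  w.IsPath ∧ 2 ≤ w.length ∧ x ∈ X ∧ y ∈ X ∧
  (∀ v ∈ w.support, v ∈ Y) ∧
  (∀ v ∈ w.support, v ≠ x → v ≠ y → v ∉ X)

/-- `(L 0, L 1, …, L p)` is a leveling of the connected graph `G`. -/
def IsLeveling {V : Type u} (G : SimpleGraph V) (p : ℕ) (L : ℕ → Set V) : Prop :=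
  (∀ i j, i ≤ p → j ≤ p → i ≠ j → Disjoint (L i) (L j)) ∧
  (∃ v : V, L 0 = {v}) ∧
  (∀ v : V, ∃ i, i ≤ p ∧ v ∈ L i) ∧
  (∀ i, 1 ≤ i → i ≤ p → ∀ v ∈ L i,
    (∃ u ∈ L (i - 1), G.Adj v u) ∧ (∀ j, j + 2 ≤ i → ∀ u ∈ L j, ¬ G.Adj v u))

/-- `G[Y]` is a connected component of `G[S]`. -/
def IsCompOf {V : Type u} (G : SimpleGraph V) (Y S : Set V) : Prop :=
  Y ⊆ S ∧ (G.induce Y).Connected ∧ ∀ u ∈ Y, ∀ v ∈ S, G.Adj u v → v ∈ Y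

-- (appended after the given defs)

open SimpleGraph

section WalkLemmas

variable {V : Type u} {Γ : Type v} {G : SimpleGraph V}

lemma walkVal_append [AddCommGroup Γ] (γ : Sym2 V → Γ) {x y z : V}
    (p : G.Walk x y) (q : G.Walk y z) :
    walkVal γ (p.append q) = walkVal γ p + walkVal γ q := by
  simp [walkVal, Walk.edges_append]

lemma walkVal_reverse [AddCommGroup Γ] (γ : Sym2 V → Γ) {x y : V} (p : G.Walk x y) :
    walkVal γ p.reverse = walkVal γ p := by
  simp [walkVal, Walk.edges_reverse, List.sum_reverse]

lemma not_edge_end_of_isPath {u v : V} {p : G.Walk u v} (hp : p.IsPath) (hl : 2 ≤ p.length) :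
    s(u, v) ∉ p.edges := by
  intro hmem
  cases p with
  | nil => simp at hmem
  | @cons _ w _ h q =>
    rw [Walk.edges_cons, List.mem_cons] at hmem
    rcases hmem with hmem | hmem
    · rw [Sym2.eq_iff] at hmem
      rcases hmem with ⟨-, rfl⟩ | ⟨rfl, rfl⟩
      · have : q = Walk.nil := Walk.isPath_iff_eq_nil.mp hp.of_cons
        subst this; simp at hl
      · exact G.loopless.irrefl _ h
    · have := Walk.fst_mem_support_of_mem_edges q hmem
      exact ((Walk.cons_isPath_iff h q).mp hp).2 this

lemma isCycle_append {u v : V} {p : G.Walk u v} {q : G.Walk v u}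
    (hp : p.IsPath) (hq : q.IsPath) (hpl : 2 ≤ p.length)
    (hmeet : ∀ x, x ∈ p.support → x ∈ q.support → x = u ∨ x = v) :
    (p.append q).IsCycle := by
  have huv : u ≠ v := by
    rintro rfl
    have : p = Walk.nil := Walk.isPath_iff_eq_nil.mp hp
    subst this; simp at hpl
  rw [Walk.isCycle_def]
  refine ⟨⟨?_⟩, ?_, ?_⟩
  · rw [Walk.edges_append, List.nodup_append']
    refine ⟨hp.isTrail.edges_nodup, hq.isTrail.edges_nodup, ?_⟩
    intro e hep heq
    have he : e ∈ G.edgeSet := p.edges_subset_edgeSet hep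
    induction e with
    | h a c =>
      have hac : a ≠ c := (G.mem_edgeSet.mp he).ne
      have ha1 : a ∈ p.support := Walk.fst_mem_support_of_mem_edges p hep
      have hc1 : c ∈ p.support := Walk.snd_mem_support_of_mem_edges p hep
      have ha2 : a ∈ q.support := Walk.fst_mem_support_of_mem_edges q heq
      have hc2 : c ∈ q.support := Walk.snd_mem_support_of_mem_edges q heq
      have ha := hmeet a ha1 ha2
      have hc := hmeet c hc1 hc2
      have : s(a, c) = s(u, v) := by
        rcases ha with rfl | rfl <;> rcases hc with rfl | rfl <;>
          first | exact absurd rfl hac | exact rfl | exact Sym2.eq_swap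
      rw [this] at hep
      exact not_edge_end_of_isPath hp hpl hep
  · intro hnil
    have := congrArg Walk.length hnil
    rw [Walk.length_append] at this
    simp only [Walk.length_nil] at this
    omega
  · rw [Walk.support_append, Walk.support_eq_cons p, List.cons_append, List.tail_cons,
      List.nodup_append']
    refine ⟨hp.support_nodup.tail, ?_, ?_⟩
    · have := hq.support_nodup
      rw [Walk.support_eq_cons q] at this
      exact this.tail
    · intro x hx1 hx2
      have hx1' : x ∈ p.support := by
        rw [Walk.support_eq_cons p]; exact List.mem_cons_of_mem _ hx1
      have hx2' : x ∈ q.support := by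
        rw [Walk.support_eq_cons q]; exact List.mem_cons_of_mem _ hx2
      rcases hmeet x hx1' hx2' with rfl | rfl
      · have := hp.support_nodup
        rw [Walk.support_eq_cons p] at this
        exact (List.nodup_cons.mp this).1 hx1
      · have := hq.support_nodup
        rw [Walk.support_eq_cons q] at this
        exact (List.nodup_cons.mp this).1 hx2

end WalkLemmas

universe w

def listVal {ι : Type w} {Γ : Type v} [AddCommGroup Γ] (val : ι → ι → Γ) :
    List ι → ι → ι → Γ
  | [], x, y => val x y
  | z :: l, x, y => val x z + listVal val l z y

section Chain

variable {V : Type u} {ι : Type w} {G : SimpleGraph V}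

def chainWalk (b : ι → V) (Q : ∀ i j : ι, G.Walk (b i) (b j)) :
    (l : List ι) → (x y : ι) → G.Walk (b x) (b y)
  | [], x, y => Q x y
  | z :: l, x, y => (Q x z).append (chainWalk b Q l z y)

lemma pair_mem_aux : ∀ (c : List ι), c.Nodup → ∀ i j : ι,
    (i, j) ∈ c.zip c.tail → i ≠ j ∧ i ∈ c ∧ j ∈ c.tail := by
  intro c
  induction c with
  | nil => simp
  | cons a t ih =>
    cases t with
    | nil => simp
    | cons d t' =>
      intro hnd i j hm
      rw [List.tail_cons, List.zip_cons_cons, List.mem_cons] at hm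
      rcases hm with h | h
      · rw [Prod.mk.injEq] at h
        obtain ⟨rfl, rfl⟩ := h
        refine ⟨fun hh => (List.nodup_cons.mp hnd).1 (hh ▸ List.mem_cons_self),
          by simp, by simp⟩
      · obtain ⟨hne, hi, hj⟩ := ih hnd.of_cons i j h
        exact ⟨hne, List.mem_cons_of_mem _ hi, List.mem_cons_of_mem _ hj⟩

variable {b : ι → V} {Q : ∀ i j : ι, G.Walk (b i) (b j)}

lemma chainWalk_length (hb : Function.Injective b) :
    ∀ (l : List ι) (x y : ι), (x :: (l ++ [y])).Nodup →
      l.length + 1 ≤ (chainWalk b Q l x y).length := by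
  intro l
  induction l with
  | nil =>
    intro x y hnd
    have hxy : x ≠ y := by simp at hnd; tauto
    show 0 + 1 ≤ (Q x y).length
    have : (Q x y).length ≠ 0 := fun h => hxy (hb (Walk.eq_of_length_eq_zero h))
    omega
  | cons z l ih =>
    intro x y hnd
    have hx : x ∉ (z :: l) ++ [y] := (List.nodup_cons.mp hnd).1
    have hxz : x ≠ z := fun h => hx (by simp [h])
    have h1 : (Q x z).length ≠ 0 := fun h => hxz (hb (Walk.eq_of_length_eq_zero h))
    have h2 := ih z y hnd.of_cons
    show (z :: l).length + 1 ≤ ((Q x z).append (chainWalk b Q l z y)).length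
    rw [Walk.length_append]
    simp only [List.length_cons]
    omega

lemma walkVal_chainWalk {Γ : Type v} [AddCommGroup Γ] (γ : Sym2 V → Γ) :
    ∀ (l : List ι) (x y : ι),
      walkVal γ (chainWalk b Q l x y) = listVal (fun i j => walkVal γ (Q i j)) l x y := by
  intro l
  induction l with
  | nil => intro x y; rfl
  | cons z l ih =>
    intro x y
    show walkVal γ ((Q x z).append (chainWalk b Q l z y)) = _
    rw [walkVal_append, ih]
    rfl

lemma chainWalk_spec (hb : Function.Injective b)
    (hQp : ∀ i j : ι, i ≠ j → (Q i j).IsPath)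
    (hQd : ∀ i j k l : ι, i ≠ j → k ≠ l → ¬((i = k ∧ j = l) ∨ (i = l ∧ j = k)) →
      ∀ v, v ∈ (Q i j).support → v ∈ (Q k l).support →
        (v = b i ∨ v = b j) ∧ (v = b k ∨ v = b l)) :
    ∀ (l : List ι) (x y : ι), (x :: (l ++ [y])).Nodup →
      (chainWalk b Q l x y).IsPath ∧
      ∀ v ∈ (chainWalk b Q l x y).support, ∃ st : ι × ι,
        st ∈ (x :: (l ++ [y])).zip (l ++ [y]) ∧ v ∈ (Q st.1 st.2).support := by
  intro l
  induction l with
  | nil =>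
    intro x y hnd
    have hxy : x ≠ y := by simp at hnd; tauto
    refine ⟨hQp x y hxy, fun v hv => ⟨(x, y), by simp, hv⟩⟩
  | cons z l ih =>
    intro x y hnd
    have hx : x ∉ (z :: l) ++ [y] := (List.nodup_cons.mp hnd).1
    have hx' : x ∉ z :: (l ++ [y]) := by simpa using hx
    have hxz : x ≠ z := fun h => hx' (h ▸ List.mem_cons_self)
    have hnd' : (z :: (l ++ [y])).Nodup := hnd.of_cons
    obtain ⟨ihpath, ihspec⟩ := ih z y hnd'
    have key : ∀ v, v ∈ (Q x z).support → v ∈ (chainWalk b Q l z y).support → v = b z := by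
      intro v hv1 hv2
      obtain ⟨⟨i, j⟩, hst, hv3⟩ := ihspec v hv2
      obtain ⟨hij, hi, hj⟩ := pair_mem_aux _ hnd' i j hst
      rw [List.tail_cons] at hj
      have hne : ¬((x = i ∧ z = j) ∨ (x = j ∧ z = i)) := by
        rintro (⟨rfl, rfl⟩ | ⟨rfl, rfl⟩)
        · exact hx' hi
        · exact hx' (List.mem_cons_of_mem _ hj)
      obtain ⟨h1, h2⟩ := hQd x z i j hxz hij hne v hv1 hv3
      rcases h1 with h1 | h1
      · exfalso
        rcases h2 with h2 | h2
        · have hxi : x = i := hb (h1.symm.trans h2)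
          exact hx' (hxi ▸ hi)
        · have hxj : x = j := hb (h1.symm.trans h2)
          exact hx' (List.mem_cons_of_mem _ (hxj ▸ hj))
      · exact h1
    constructor
    · show ((Q x z).append (chainWalk b Q l z y)).IsPath
      rw [Walk.isPath_def, Walk.support_append, List.nodup_append']
      refine ⟨(hQp x z hxz).support_nodup, ?_, ?_⟩
      · have h := ihpath.support_nodup
        rw [Walk.support_eq_cons (chainWalk b Q l z y)] at h
        exact h.tail
      · intro w hw1 hw2
        have hw2' : w ∈ (chainWalk b Q l z y).support := by
          rw [Walk.support_eq_cons (chainWalk b Q l z y)]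
          exact List.mem_cons_of_mem _ hw2
        have := key w hw1 hw2'
        subst this
        have h := ihpath.support_nodup
        rw [Walk.support_eq_cons (chainWalk b Q l z y)] at h
        exact (List.nodup_cons.mp h).1 hw2
    · intro v hv
      have hv' : v ∈ (Q x z).support ∨ v ∈ (chainWalk b Q l z y).support := by
        have : v ∈ ((Q x z).append (chainWalk b Q l z y)).support := hv
        rw [Walk.mem_support_append_iff] at this
        exact this
      rcases hv' with hv' | hv'
      · exact ⟨(x, z), by simp, hv'⟩
      · obtain ⟨st, hst, hv3⟩ := ihspec v hv'
        refine ⟨st, ?_, hv3⟩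
        show st ∈ (x :: (z :: (l ++ [y]))).zip (z :: (l ++ [y]))
        rw [List.zip_cons_cons]
        exact List.mem_cons_of_mem _ hst

lemma chainWalk_cycle (hb : Function.Injective b)
    (hQp : ∀ i j : ι, i ≠ j → (Q i j).IsPath)
    (hQd : ∀ i j k l : ι, i ≠ j → k ≠ l → ¬((i = k ∧ j = l) ∨ (i = l ∧ j = k)) →
      ∀ v, v ∈ (Q i j).support → v ∈ (Q k l).support →
        (v = b i ∨ v = b j) ∧ (v = b k ∨ v = b l))
    {l : List ι} {x y : ι} (hnd : (x :: (l ++ [y])).Nodup) (hl : l ≠ []) :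
    ((chainWalk b Q l x y).append (Q y x)).IsCycle := by
  obtain ⟨hpath, hspec⟩ := chainWalk_spec hb hQp hQd l x y hnd
  have hx : x ∉ l ++ [y] := (List.nodup_cons.mp hnd).1
  have hxy : x ≠ y := fun h => hx (by simp [h])
  have hyl : y ∉ l := by
    have h := hnd.of_cons
    rw [List.nodup_append'] at h
    exact fun hy => h.2.2 hy (List.mem_singleton_self y)
  refine isCycle_append hpath (hQp y x hxy.symm) ?_ ?_
  · have h1 := chainWalk_length (Q := Q) hb l x y hnd
    have h2 : 1 ≤ l.length := List.length_pos_iff.mpr hl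
    omega
  · intro w hw1 hw2
    obtain ⟨⟨i, j⟩, hst, hw3⟩ := hspec w hw1
    obtain ⟨hij, hi, hj⟩ := pair_mem_aux (x :: (l ++ [y])) hnd i j hst
    rw [List.tail_cons] at hj
    have hne : ¬((i = y ∧ j = x) ∨ (i = x ∧ j = y)) := by
      rintro (⟨hiy, hjx⟩ | ⟨hix, hjy⟩)
      · exact hx (hjx ▸ hj)
      · rw [hix, hjy] at hst
        cases l with
        | nil => exact hl rfl
        | cons z l' =>
          rw [List.cons_append, List.zip_cons_cons, List.mem_cons] at hst
          rcases hst with h | h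
          · rw [Prod.mk.injEq] at h
            exact hyl (h.2 ▸ (List.mem_cons_self (a := z) (l := l')))
          · have := (pair_mem_aux (z :: (l' ++ [y])) hnd.of_cons x y h).2.1
            exact hx (by simpa using this)
    have := hQd i j y x hij hxy.symm hne w hw3 hw2
    exact this.2.symm

end Chain

section Ramsey

def ramseyAux (c : ℕ) : ℕ → ℕ
  | 0 => 1
  | L + 1 => c * ramseyAux c L + 1

lemma one_le_ramseyAux (c L : ℕ) : 1 ≤ ramseyAux c L := by
  cases L with
  | zero => exact le_refl 1
  | succ L => simp [ramseyAux]

lemma pair_sublist_of_mem {V : Type u} {x y : V} : ∀ {l : List V}, l.Nodup →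
    x ∈ l → y ∈ l → x ≠ y → [x, y].Sublist l ∨ [y, x].Sublist l := by
  intro l
  induction l with
  | nil => simp
  | cons a t ih =>
    intro hnd hx hy hxy
    rcases List.mem_cons.mp hx with rfl | hx'
    · have hy' : y ∈ t := (List.mem_cons.mp hy).resolve_left (fun h => hxy h.symm)
      exact Or.inl (List.Sublist.cons₂ _ (List.singleton_sublist.mpr hy'))
    · rcases List.mem_cons.mp hy with rfl | hy'
      · exact Or.inr (List.Sublist.cons₂ _ (List.singleton_sublist.mpr hx'))
      · rcases ih hnd.of_cons hx' hy' hxy with h | h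
        · exact Or.inl (h.cons _)
        · exact Or.inr (h.cons _)

lemma seq_lemma {V : Type u} {α : Type w} (c : ℕ) (hc : 1 ≤ c)
    (F : Finset α) (hF : F.card ≤ c) (χ : V → V → α) :
    ∀ (L : ℕ) (S : Finset V), (∀ i ∈ S, ∀ j ∈ S, i ≠ j → χ i j ∈ F) →
      ramseyAux c L ≤ S.card →
      ∃ (vs : List V) (col : V → α), vs.length = L ∧ vs.Nodup ∧
        (∀ v ∈ vs, v ∈ S) ∧ (∀ v ∈ vs, col v ∈ F) ∧
        (∀ x y : V, [x, y].Sublist vs → χ x y = col x) := by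
  classical
  intro L
  induction L with
  | zero =>
    intro S _ _
    refine ⟨[], fun v => χ v v, rfl, by simp, by simp, by simp, ?_⟩
    intro x y h
    have := h.length_le
    simp at this
  | succ L ih =>
    intro S hmem hcard
    have hS : S.Nonempty := by
      rw [← Finset.card_pos]
      have h1 : 1 ≤ ramseyAux c (L + 1) := one_le_ramseyAux c (L + 1)
      omega
    obtain ⟨v, hv⟩ := hS
    set S' := S.erase v with hS'
    have hS'card : c * ramseyAux c L ≤ S'.card := by
      have hce : S'.card = S.card - 1 := by rw [hS']; exact Finset.card_erase_of_mem hv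
      simp only [ramseyAux] at hcard
      omega
    have hFne : F.Nonempty := by
      have h1 : 1 ≤ S'.card := le_trans (by nlinarith [one_le_ramseyAux c L]) hS'card
      obtain ⟨u, hu⟩ := Finset.card_pos.mp h1
      have huS : u ∈ S := Finset.mem_of_mem_erase hu
      have huv : u ≠ v := Finset.ne_of_mem_erase hu
      exact ⟨χ v u, hmem v hv u huS (Ne.symm huv)⟩
    obtain ⟨a, haF, hfib⟩ := Finset.exists_le_card_fiber_of_mul_le_card_of_maps_to
      (f := fun u => χ v u) (t := F)
      (fun u hu => hmem v hv u (Finset.mem_of_mem_erase hu) (Ne.symm (Finset.ne_of_mem_erase hu)))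
      hFne (le_trans (Nat.mul_le_mul_right _ hF) hS'card)
    set S'' := S'.filter (fun u => χ v u = a) with hS''
    obtain ⟨vs', col', hlen, hnd, hsub, hcol, hkey⟩ := ih S''
      (fun i hi j hj hij => hmem i (Finset.mem_of_mem_erase (Finset.mem_of_mem_filter _ hi))
        j (Finset.mem_of_mem_erase (Finset.mem_of_mem_filter _ hj)) hij) hfib
    have hvnot : v ∉ vs' := by
      intro hmem'
      have := hsub v hmem'
      exact (Finset.notMem_erase v S) (Finset.mem_of_mem_filter _ this)
    refine ⟨v :: vs', Function.update col' v a, by simp [hlen], by simp [hnd, hvnot], ?_, ?_, ?_⟩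
    · intro u hu
      rcases List.mem_cons.mp hu with rfl | hu'
      · exact hv
      · exact Finset.mem_of_mem_erase (Finset.mem_of_mem_filter _ (hsub u hu'))
    · intro u hu
      rcases List.mem_cons.mp hu with rfl | hu'
      · simp [Function.update_self, haF]
      · have huv : u ≠ v := by rintro rfl; exact hvnot hu'
        rw [Function.update_of_ne huv]
        exact hcol u hu'
    · intro x y h
      cases h with
      | cons _ h' =>
        have hx : x ∈ vs' := h'.subset (by simp)
        have hxv : x ≠ v := by rintro rfl; exact hvnot hx
        rw [Function.update_of_ne hxv]
        exact hkey x y h'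
      | cons_cons _ h' =>
        have hy : y ∈ vs' := h'.subset (by simp)
        have : y ∈ S'' := hsub y hy
        rw [Function.update_self]
        exact (Finset.mem_filter.mp this).2

lemma ramsey_exists (c m : ℕ) (hc : 1 ≤ c) :
    ∃ N : ℕ, ∀ {V : Type u} (S : Finset V) {α : Type w} (F : Finset α),
      F.card ≤ c → ∀ χ : V → V → α, (∀ i j, χ i j = χ j i) →
      (∀ i ∈ S, ∀ j ∈ S, i ≠ j → χ i j ∈ F) → N ≤ S.card →
      ∃ (T : Finset V) (a : α), T ⊆ S ∧ m ≤ T.card ∧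
        ∀ i ∈ T, ∀ j ∈ T, i ≠ j → χ i j = a := by
  classical
  refine ⟨ramseyAux c (c * m + 1), ?_⟩
  intro V S α F hF χ hsym hmem hcard
  obtain ⟨vs, col, hlen, hnd, hsub, hcol, hkey⟩ :=
    seq_lemma c hc F hF χ (c * m + 1) S hmem hcard
  have hvscard : vs.toFinset.card = c * m + 1 := by
    rw [List.toFinset_card_of_nodup hnd, hlen]
  obtain ⟨a, haF, hfib⟩ := Finset.exists_lt_card_fiber_of_mul_lt_card_of_maps_to
    (f := col) (s := vs.toFinset) (t := F) (n := m)
    (fun u hu => hcol u (List.mem_toFinset.mp hu))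
    (by
      have : F.card * m ≤ c * m := Nat.mul_le_mul_right _ hF
      omega)
  refine ⟨(vs.toFinset.filter (fun u => col u = a)), a, ?_, le_of_lt hfib, ?_⟩
  · intro u hu
    exact hsub u (List.mem_toFinset.mp (Finset.mem_of_mem_filter _ hu))
  · intro i hi j hj hij
    have hi' : i ∈ vs := List.mem_toFinset.mp (Finset.mem_of_mem_filter _ hi)
    have hj' : j ∈ vs := List.mem_toFinset.mp (Finset.mem_of_mem_filter _ hj)
    have hcoli : col i = a := (Finset.mem_filter.mp hi).2
    have hcolj : col j = a := (Finset.mem_filter.mp hj).2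
    rcases pair_sublist_of_mem hnd hi' hj' hij with h | h
    · rw [hkey i j h, hcoli]
    · rw [hsym i j, hkey j i h, hcolj]

end Ramsey

lemma listVal_eq_smul {ι : Type w} {Γ : Type v} [AddCommGroup Γ] (val : ι → ι → Γ) (a : Γ)
    (T : Finset ι) (hmono : ∀ i ∈ T, ∀ j ∈ T, i ≠ j → val i j = a) :
    ∀ (l : List ι) (x y : ι), (x :: (l ++ [y])).Nodup → (∀ v ∈ x :: (l ++ [y]), v ∈ T) →
      listVal val l x y = (l.length + 1) • a := by
  intro l
  induction l with
  | nil =>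
    intro x y hnd hmem
    have hxy : x ≠ y := by simp at hnd; tauto
    show val x y = (List.length [] + 1) • a
    rw [hmono x (hmem x (by simp)) y (hmem y (by simp)) hxy]
    simp
  | cons z l ih =>
    intro x y hnd hmem
    have hxz : x ≠ z := by
      have h := (List.nodup_cons.mp hnd).1
      intro hh; exact h (by simp [hh])
    show val x z + listVal val l z y = _
    rw [hmono x (hmem x (by simp)) z (hmem z (by simp)) hxz,
      ih z y hnd.of_cons (fun v hv => hmem v (List.mem_cons_of_mem _ hv))]
    simp only [List.length_cons]
    rw [add_comm a ((l.length + 1) • a), ← succ_nsmul]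

lemma core (p ω : ℕ) (hω : 1 ≤ ω) :
    ∃ r : ℕ, 5 ≤ r ∧ ∀ (Γ : Type v) [AddCommGroup Γ],
      ({g : Γ | g + g = 0}).encard ≤ (p : ℕ∞) →
      ∀ (A : Set Γ), (Aᶜ : Set Γ).encard ≤ (ω : ℕ∞) →
      ∀ val : Fin r → Fin r → Γ, (∀ i j, val i j = val j i) →
        (∀ i j, i ≠ j → val i j ∈ A) →
        ∃ (x y : Fin r) (l : List (Fin r)), (x :: (l ++ [y])).Nodup ∧ l ≠ [] ∧
          listVal val l x y + val y x ∈ A := by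
  classical
  obtain ⟨M, hM⟩ := ramsey_exists.{0, v} ω (ω + 3) hω
  set n := ω + 3 with hn
  set N₁ := ω ^ 3 * p with hN₁
  set r := N₁ * M + 6 with hr
  refine ⟨r, by omega, ?_⟩
  intro Γ _ hpcard A hAcard val hsym hvalA
  by_contra hcon
  push_neg at hcon
  have hBfin : (Aᶜ : Set Γ).Finite := Set.finite_of_encard_le_coe hAcard
  set Bf := hBfin.toFinset with hBfdef
  have hBcard : Bf.card ≤ ω := by
    have h := hBfin.encard_eq_coe_toFinset_card
    rw [h] at hAcard
    exact_mod_cast hAcard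
  have hBmem : ∀ g : Γ, g ∉ A → g ∈ Bf := fun g hg => hBfin.mem_toFinset.mpr hg
  have hBnotA : ∀ g ∈ Bf, g ∉ A := fun g hg => hBfin.mem_toFinset.mp hg
  have cyc : ∀ (x y : Fin r) (l : List (Fin r)), (x :: (l ++ [y])).Nodup → l ≠ [] →
      listVal val l x y + val y x ∈ Bf := fun x y l h1 h2 => hBmem _ (hcon x y l h1 h2)
  have hTorFin : ({g : Γ | g + g = 0}).Finite := Set.finite_of_encard_le_coe hpcard
  set Torf := hTorFin.toFinset with hTorfdef
  have hTorcard : Torf.card ≤ p := by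
    have h := hTorFin.encard_eq_coe_toFinset_card
    rw [h] at hpcard
    exact_mod_cast hpcard
  set Df := ((Bf ×ˢ Bf) ×ˢ Bf).image (fun q => q.1.1 + q.1.2 - q.2) with hDfdef
  have hDcard : Df.card ≤ ω ^ 3 := by
    calc Df.card ≤ ((Bf ×ˢ Bf) ×ˢ Bf).card := Finset.card_image_le
    _ = Bf.card * Bf.card * Bf.card := by
        rw [Finset.card_product, Finset.card_product]
    _ ≤ ω * ω * ω := Nat.mul_le_mul (Nat.mul_le_mul hBcard hBcard) hBcard
    _ = ω ^ 3 := by ring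
  set rep : Γ → Γ := fun d => if h : ∃ x : Γ, x + x = d then h.choose else 0 with hrepdef
  set Xf := (Df ×ˢ Torf).image (fun q => rep q.1 + q.2) with hXfdef
  have hXcard : Xf.card ≤ N₁ := by
    calc Xf.card ≤ (Df ×ˢ Torf).card := Finset.card_image_le
    _ = Df.card * Torf.card := Finset.card_product _ _
    _ ≤ ω ^ 3 * p := Nat.mul_le_mul hDcard hTorcard
  have hXmem : ∀ g : Γ, g + g ∈ Df → g ∈ Xf := by
    intro g hg
    have hex : ∃ x : Γ, x + x = g + g := ⟨g, rfl⟩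
    have hrepspec : rep (g + g) + rep (g + g) = g + g := by
      rw [hrepdef]
      simp only [dif_pos hex]
      exact hex.choose_spec
    have htor : g - rep (g + g) ∈ Torf := by
      rw [hTorfdef, Set.Finite.mem_toFinset]
      show (g - rep (g + g)) + (g - rep (g + g)) = 0
      have h1 : (g - rep (g + g)) + (g - rep (g + g))
          = (g + g) - (rep (g + g) + rep (g + g)) := by abel
      rw [h1, hrepspec, sub_self]
    rw [hXfdef]
    refine Finset.mem_image.mpr ⟨(g + g, g - rep (g + g)),
      Finset.mem_product.mpr ⟨hg, htor⟩, ?_⟩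
    show rep (g + g) + (g - rep (g + g)) = g
    abel
  set z0 : Fin r := ⟨0, by omega⟩ with hz0
  set S0 := (Finset.univ : Finset (Fin r)).erase z0 with hS0
  have hS0card : S0.card = r - 1 := by
    rw [hS0, Finset.card_erase_of_mem (Finset.mem_univ _), Finset.card_univ, Fintype.card_fin]
  have tri : ∀ i j k : Fin r, i ≠ j → i ≠ k → j ≠ k →
      val i j + val j k + val k i ∈ Bf := by
    intro i j k h1 h2 h3
    have h := cyc i k [j] (by simp [h1, h2, h3]) (by simp)
    simpa [listVal] using h
  have quad : ∀ i j k l : Fin r, i ≠ j → i ≠ k → i ≠ l → j ≠ k → j ≠ l → k ≠ l →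
      val i j + val j k + val k l + val l i ∈ Bf := by
    intro i j k l h1 h2 h3 h4 h5 h6
    have h := cyc i l [j, k] (by simp [h1, h2, h3, h4, h5, h6]) (by simp)
    simpa [listVal, add_assoc] using h
  have hub : ∀ j ∈ S0, val z0 j ∈ Xf := by
    intro j hj
    have hjz : j ≠ z0 := Finset.ne_of_mem_erase hj
    have hcard2 : 2 ≤ ((Finset.univ : Finset (Fin r)) \ {z0, j}).card := by
      rw [Finset.card_sdiff_of_subset (Finset.subset_univ _), Finset.card_univ, Fintype.card_fin]
      have h2 : ({z0, j} : Finset (Fin r)).card ≤ 2 :=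
        le_trans (Finset.card_insert_le _ _) (by simp)
      omega
    obtain ⟨i, hi⟩ := Finset.card_pos.mp (by omega : 0 < ((Finset.univ : Finset (Fin r)) \ {z0, j}).card)
    have h1 : 1 ≤ (((Finset.univ : Finset (Fin r)) \ {z0, j}).erase i).card := by
      rw [Finset.card_erase_of_mem hi]; omega
    obtain ⟨k, hk⟩ := Finset.card_pos.mp (by omega : 0 < (((Finset.univ : Finset (Fin r)) \ {z0, j}).erase i).card)
    have hki : k ≠ i := Finset.ne_of_mem_erase hk
    have hk' := Finset.mem_of_mem_erase hk
    have hi2 := Finset.mem_sdiff.mp hi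
    have hk2 := Finset.mem_sdiff.mp hk'
    have hiz : i ≠ z0 := fun h => hi2.2 (by simp [h])
    have hij : i ≠ j := fun h => hi2.2 (by simp [h])
    have hkz : k ≠ z0 := fun h => hk2.2 (by simp [h])
    have hkj : k ≠ j := fun h => hk2.2 (by simp [h])
    have t1 := tri z0 i j (Ne.symm hiz) (Ne.symm hjz) hij
    have t2 := tri z0 j k (Ne.symm hjz) (Ne.symm hkz) (Ne.symm hkj)
    have q1 := quad z0 i j k (Ne.symm hiz) (Ne.symm hjz) (Ne.symm hkz) hij (Ne.symm hki) (Ne.symm hkj)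
    apply hXmem
    have heq : val z0 j + val z0 j =
        (val z0 i + val i j + val j z0) + (val z0 j + val j k + val k z0)
          - (val z0 i + val i j + val j k + val k z0) := by
      rw [hsym j z0]; abel
    rw [heq, hDfdef]
    refine Finset.mem_image.mpr ⟨((val z0 i + val i j + val j z0,
      val z0 j + val j k + val k z0), val z0 i + val i j + val j k + val k z0), ?_, rfl⟩
    refine Finset.mem_product.mpr ⟨Finset.mem_product.mpr ⟨t1, t2⟩, q1⟩
  obtain ⟨cval, hcX, hfib⟩ := Finset.exists_lt_card_fiber_of_mul_lt_card_of_maps_to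
    (f := fun j => val z0 j) (s := S0) (t := Xf) (n := M) hub
    (by
      have h1 : Xf.card * M ≤ N₁ * M := Nat.mul_le_mul_right _ hXcard
      rw [hS0card]
      omega)
  set Sc := S0.filter (fun j => val z0 j = cval) with hScdef
  have hSccard : M ≤ Sc.card := le_of_lt hfib
  set F := Bf.image (fun g => g - (cval + cval)) with hFdef
  have hFcard : F.card ≤ ω := le_trans Finset.card_image_le hBcard
  have hmemF : ∀ i ∈ Sc, ∀ j ∈ Sc, i ≠ j → val i j ∈ F := by
    intro i hi j hj hij
    have hi' := Finset.mem_filter.mp hi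
    have hj' := Finset.mem_filter.mp hj
    have hiz : i ≠ z0 := Finset.ne_of_mem_erase hi'.1
    have hjz : j ≠ z0 := Finset.ne_of_mem_erase hj'.1
    have t := tri z0 i j (Ne.symm hiz) (Ne.symm hjz) hij
    refine Finset.mem_image.mpr ⟨val z0 i + val i j + val j z0, t, ?_⟩
    rw [hsym j z0, hi'.2, hj'.2]
    abel
  obtain ⟨T, a, hTS, hTcard, hmono⟩ := hM Sc F hFcard val hsym hmemF hSccard
  have haA : a ∈ A := by
    obtain ⟨i, hi, j, hj, hij⟩ := Finset.one_lt_card.mp (by omega : 1 < T.card)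
    rw [← hmono i hi j hj hij]
    exact hvalA i j hij
  have kcyc : ∀ k, 3 ≤ k → k ≤ n → k • a ∈ Bf := by
    intro k h3 hkn
    have hkT : k ≤ T.toList.length := by rw [Finset.length_toList]; omega
    have hlen : (T.toList.take k).length = k := by rw [List.length_take]; omega
    have hnd : (T.toList.take k).Nodup := (List.take_sublist _ _).nodup T.nodup_toList
    have hmemT : ∀ v ∈ T.toList.take k, v ∈ T := fun v hv =>
      Finset.mem_toList.mp ((List.take_sublist _ _).subset hv)
    rcases hl : T.toList.take k with _ | ⟨x, rest⟩
    · rw [hl] at hlen; simp at hlen; omega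
    · rw [hl] at hlen hnd hmemT
      have hrestne : rest ≠ [] := by
        intro h; rw [h] at hlen; simp at hlen; omega
      set y := rest.getLast hrestne with hy
      set mid := rest.dropLast with hmid
      have hdecomp : mid ++ [y] = rest := List.dropLast_append_getLast hrestne
      have hnd' : (x :: (mid ++ [y])).Nodup := by rw [hdecomp]; exact hnd
      have hmemT' : ∀ v ∈ x :: (mid ++ [y]), v ∈ T := by rw [hdecomp]; exact hmemT
      have hmidlen : mid.length = k - 2 := by
        have h := congrArg List.length hdecomp
        simp at h hlen
        omega
      have hlv : listVal val mid x y = (mid.length + 1) • a :=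
        listVal_eq_smul val a T hmono mid x y hnd' hmemT'
      have hyx : y ≠ x := by
        have h := (List.nodup_cons.mp hnd').1
        intro hh; exact h (by simp [← hh])
      have hclose : val y x = a :=
        hmono y (hmemT' y (by simp)) x (hmemT' x (by simp)) hyx
      have hmidne : mid ≠ [] := by
        intro h; rw [h] at hmidlen; simp at hmidlen; omega
      have hc := cyc x y mid hnd' hmidne
      rw [hlv, hclose] at hc
      have hfin : (mid.length + 1) • a + a = k • a := by
        rw [← succ_nsmul]
        congr 1
        omega
      rwa [hfin] at hc
  have key : ∀ k l : ℕ, 3 ≤ k → l ≤ n → k < l → k • a = l • a → False := by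
    intro k l h3 hln hkl heq
    set d := l - k with hd
    have hd1 : 1 ≤ d := by omega
    have hdω : d ≤ ω := by omega
    have hd0 : d • a = 0 := by
      have h1 : k • a + d • a = k • a + 0 := by
        rw [add_zero, ← add_nsmul]
        rw [show k + d = l by omega]
        exact heq.symm
      exact add_left_cancel h1
    by_cases hdone : d = 1
    · have ha0 : a = 0 := by rw [hdone, one_nsmul] at hd0; exact hd0
      have h3a : (3 : ℕ) • a = a := by rw [ha0]; simp
      have := kcyc 3 (le_refl 3) (by omega)
      rw [h3a] at this
      exact hBnotA a this haA
    · have hma : (d + 1) • a = a := by rw [succ_nsmul, hd0, zero_add]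
      have := kcyc (d + 1) (by omega) (by omega)
      rw [hma] at this
      exact hBnotA a this haA
  have hmap : ∀ k ∈ Finset.Icc 3 n, k • a ∈ Bf := fun k hk =>
    kcyc k (Finset.mem_Icc.mp hk).1 (Finset.mem_Icc.mp hk).2
  have hcardlt : Bf.card < (Finset.Icc 3 n).card := by
    rw [Nat.card_Icc]; omega
  obtain ⟨k, hk, l, hl, hkl, heq⟩ :=
    Finset.exists_ne_map_eq_of_card_lt_of_maps_to hcardlt hmap
  have hk' := Finset.mem_Icc.mp hk
  have hl' := Finset.mem_Icc.mp hl
  rcases lt_trichotomy k l with h | h | h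
  · exact key k l hk'.1 hl'.2 h heq
  · exact hkl h
  · exact key l k hl'.1 hk'.2 h heq.symm

theorem statement18 (p ω : ℕ) (hp : 0 < p) (hω : 0 < ω) :
    ∃ r : ℕ,
      ∀ (Γ : Type v) [AddCommGroup Γ],
        ({g : Γ | g + g = 0}).encard ≤ (p : ℕ∞) →
        ∀ (A : Set Γ), A.Nonempty → (Aᶜ : Set Γ).encard ≤ (ω : ℕ∞) →
        ∀ (V : Type u) [Fintype V] (H : SimpleGraph V) (γ : Sym2 V → Γ)
          (b : Fin r → V) (P : ∀ i j : Fin r, H.Walk (b i) (b j)),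
          IsSpanningKtSubdivision H r b P →
          (∀ i j : Fin r, i < j → walkVal γ (P i j) ∈ A) →
          (∃ (v : V) (w : H.Walk v v), w.IsCycle ∧ walkVal γ w ∈ A) ∧
            2 ≤ arb H γ A := by
  obtain ⟨r, hr5, hcore⟩ := core.{v} p ω hω
  refine ⟨r, ?_⟩
  intro Γ _ hpcard A hAne hAcard V _ H γ b P hsub hval
  obtain ⟨⟨hb, hPp, hPbr, hPd⟩, -, -⟩ := hsub
  set Q : ∀ i j : Fin r, H.Walk (b i) (b j) :=
    fun i j => if i < j then P i j else (P j i).reverse with hQdef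
  have hQlt : ∀ i j : Fin r, i < j → Q i j = P i j := by
    intro i j h
    rw [hQdef]
    exact if_pos h
  have hQgt : ∀ i j : Fin r, j < i → Q i j = (P j i).reverse := by
    intro i j h
    rw [hQdef]
    exact if_neg (asymm h)
  have hQsupp : ∀ (i j : Fin r), j < i → ∀ v : V,
      v ∈ (Q i j).support ↔ v ∈ (P j i).support := by
    intro i j h v
    rw [hQgt i j h, Walk.support_reverse, List.mem_reverse]
  have hQp : ∀ i j : Fin r, i ≠ j → (Q i j).IsPath := by
    intro i j hij
    rcases hij.lt_or_gt with h | h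
    · rw [hQlt i j h]; exact hPp i j h
    · rw [hQgt i j h]; exact (Walk.isPath_reverse_iff _).mpr (hPp j i h)
  have hQd : ∀ i j k l : Fin r, i ≠ j → k ≠ l → ¬((i = k ∧ j = l) ∨ (i = l ∧ j = k)) →
      ∀ v, v ∈ (Q i j).support → v ∈ (Q k l).support →
        (v = b i ∨ v = b j) ∧ (v = b k ∨ v = b l) := by
    intro i j k l hij hkl hne v hv1 hv2
    rcases hij.lt_or_gt with h1 | h1 <;> rcases hkl.lt_or_gt with h2 | h2
    · rw [hQlt i j h1] at hv1
      rw [hQlt k l h2] at hv2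
      refine hPd i j k l h1 h2 ?_ v hv1 hv2
      intro hpq
      rw [Prod.mk.injEq] at hpq
      exact hne (Or.inl hpq)
    · rw [hQlt i j h1] at hv1
      rw [hQsupp k l h2 v] at hv2
      have h := hPd i j l k h1 h2 (by
        intro hpq
        rw [Prod.mk.injEq] at hpq
        exact hne (Or.inr hpq)) v hv1 hv2
      exact ⟨h.1, h.2.symm⟩
    · rw [hQsupp i j h1 v] at hv1
      rw [hQlt k l h2] at hv2
      have h := hPd j i k l h1 h2 (by
        intro hpq
        rw [Prod.mk.injEq] at hpq
        exact hne (Or.inr ⟨hpq.2, hpq.1⟩)) v hv1 hv2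
      exact ⟨h.1.symm, h.2⟩
    · rw [hQsupp i j h1 v] at hv1
      rw [hQsupp k l h2 v] at hv2
      have h := hPd j i l k h1 h2 (by
        intro hpq
        rw [Prod.mk.injEq] at hpq
        exact hne (Or.inl ⟨hpq.2, hpq.1⟩)) v hv1 hv2
      exact ⟨h.1.symm, h.2.symm⟩
  set val : Fin r → Fin r → Γ := fun i j => walkVal γ (Q i j) with hvaldef
  have hsymm : ∀ i j : Fin r, val i j = val j i := by
    intro i j
    rcases lt_trichotomy i j with h | h | h
    · rw [hvaldef]
      simp only []
      rw [hQlt i j h, hQgt j i h, walkVal_reverse]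
    · rw [h]
    · rw [hvaldef]
      simp only []
      rw [hQlt j i h, hQgt i j h, walkVal_reverse]
  have hvalA : ∀ i j : Fin r, i ≠ j → val i j ∈ A := by
    intro i j hij
    rcases hij.lt_or_gt with h | h
    · rw [hvaldef]; simp only []; rw [hQlt i j h]; exact hval i j h
    · rw [hvaldef]; simp only []; rw [hQgt i j h, walkVal_reverse]; exact hval j i h
  obtain ⟨x, y, l, hnd, hlne, hsum⟩ := hcore Γ hpcard A hAcard val hsymm hvalA
  set W := (chainWalk b Q l x y).append (Q y x) with hWdef
  have hcyc : W.IsCycle := chainWalk_cycle hb hQp hQd hnd hlne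
  have hWval : walkVal γ W = listVal val l x y + val y x := by
    rw [hWdef, walkVal_append, walkVal_chainWalk]
  have hWA : walkVal γ W ∈ A := by rw [hWval]; exact hsum
  refine ⟨⟨b x, W, hcyc, hWA⟩, ?_⟩
  -- arboricity bound
  show 2 ≤ arbOn H γ A Set.univ
  have hne : {k : ℕ | ∃ f : V → Fin k,
      ∀ i : Fin k, NoCycleValIn H γ A {v | v ∈ Set.univ ∧ f v = i}}.Nonempty := by
    refine ⟨Fintype.card V, Fintype.equivFin V, ?_⟩
    intro i u w hw hsupp
    exfalso
    cases w with
    | nil => exact Walk.IsCycle.not_of_nil hw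
    | @cons _ z _ hadj w' =>
      have hzsup : z ∈ (Walk.cons hadj w').support := by
        rw [Walk.support_cons]
        exact List.mem_cons_of_mem _ w'.start_mem_support
      have h1 := (hsupp u (Walk.start_mem_support _)).2
      have h2 := (hsupp z hzsup).2
      have : u = z := (Fintype.equivFin V).injective (h1.trans h2.symm)
      exact H.ne_of_adj hadj this
  have hmem := Nat.sInf_mem hne
  set k := sInf {k : ℕ | ∃ f : V → Fin k,
      ∀ i : Fin k, NoCycleValIn H γ A {v | v ∈ Set.univ ∧ f v = i}} with hkdef
  show 2 ≤ k
  obtain ⟨f, hf⟩ := hmem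
  by_contra hklt
  push_neg at hklt
  interval_cases k
  · exact (f (b x)).elim0
  · exact hf (f (b x)) (b x) W hcyc
      (fun z _ => ⟨Set.mem_univ z, Subsingleton.elim _ _⟩) hWA

end ArbPaper
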